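/- Let κ ∈ (−1,1)∖{0} and z ∈ 𝔻, and let R := √((1−z)² + 4κ²z) denote the principal branch square root (well-defined since (1−z)² + 4κ²z ∉ (−∞,0] for z ∈ 𝔻). Then Re( (1+z) · conj(R) ) > 0; consequently |1+z−R| < |1+z+R|, i.e. the quantity y(z,κ) := (1+z−R)/(1+z+R) = 4z(1−κ²)/(1+z+R)² lies in the open unit disc. -/

import Mathlib

/-- `R(z,w) = √((1-z)² + 4w²z)`, principal branch. -/
noncomputable def Rfun (z w : ℂ) : ℂ := ((1 - z) ^ 2 + 4 * w ^ 2 * z) ^ (1 / 2 : ℂ)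

/-!
Put `u = (1 + z) * conj R`. Then `u² = (1 + z)² * conj ((1 - z)² + 4κ²z)`, whose imaginary
part is `4(1 - κ²) * Im z * (1 - |z|²)`; hence `u²` is never a nonpositive real on `𝔻` and
`Re u` never vanishes there. Since the radicand stays in the slit plane, `Re u` is continuous
on the connected set `𝔻`, and it equals `1` at `z = 0`, so it is positive everywhere. The rest
follows from `|a ± b|² = |a|² + |b|² ± 2 Re (a * conj b)` and `(1 + z)² - R² = 4z(1 - κ²)`.
-/

open Complex ComplexConjugate Metric

theorem IsPreconnected.pos_of_continuousOn_of_ne_zero {X : Type*} [TopologicalSpace X]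
    {s : Set X} (hs : IsPreconnected s) {f : X → ℝ} (hf : ContinuousOn f s)
    (hne : ∀ x ∈ s, f x ≠ 0) {a : X} (ha : a ∈ s) (hfa : 0 < f a) {x : X} (hx : x ∈ s) :
    0 < f x := by
  by_contra! hfx
  obtain ⟨y, hy, hfy⟩ := hs.intermediate_value hx ha hf ⟨hfx, hfa.le⟩
  exact hne y hy hfy

theorem Complex.re_ne_zero_of_sq_mem_slitPlane {u : ℂ} (h : u ^ 2 ∈ slitPlane) :
    u.re ≠ 0 := by
  intro hu
  refine mem_slitPlane_iff.mp h |>.elim (fun hre => ?_) (fun him => him ?_)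
  · simp only [sq, mul_re, hu] at hre
    nlinarith
  · simp [sq, mul_im, hu]

theorem Complex.norm_sub_lt_norm_add_of_re_mul_conj_pos {a b : ℂ} (h : 0 < (a * conj b).re) :
    ‖a - b‖ < ‖a + b‖ := by
  rw [← sq_lt_sq₀ (norm_nonneg _) (norm_nonneg _), Complex.sq_norm, Complex.sq_norm, normSq_add,
    normSq_sub]
  linarith

theorem Rfun_sq (z w : ℂ) : Rfun z w ^ 2 = (1 - z) ^ 2 + 4 * w ^ 2 * z := by
  simp [Rfun]

theorem Rfun_zero (w : ℂ) : Rfun 0 w = 1 := by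
  simp [Rfun]

theorem Complex.re_sq_add_im_sq_lt_one_of_mem_ball {w : ℂ} (hw : w ∈ ball (0 : ℂ) 1) :
    w.re ^ 2 + w.im ^ 2 < 1 := by
  rw [mem_ball_zero_iff, ← sq_lt_one_iff₀ (norm_nonneg w), Complex.sq_norm, normSq_apply] at hw
  nlinarith

section Discriminant

variable {κ : ℝ} {w : ℂ}

theorem disc_mem_slitPlane (hκ : κ ^ 2 ≤ 1) (hw : w ∈ ball (0 : ℂ) 1) :
    (1 - w) ^ 2 + 4 * (κ : ℂ) ^ 2 * w ∈ slitPlane := by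
  have hxy := re_sq_add_im_sq_lt_one_of_mem_ball hw
  rw [mem_slitPlane_iff]
  by_contra! h
  obtain ⟨hre, him⟩ := h
  simp only [sq, add_re, add_im, mul_re, mul_im, sub_re, sub_im, one_re, one_im, ofReal_re,
    ofReal_im, re_ofNat, im_ofNat] at hre him
  have : w.im * (w.re + 2 * κ ^ 2 - 1) = 0 := by nlinarith
  rcases mul_eq_zero.mp this with hy | hx
  · rw [hy] at hre hxy
    rcases le_or_gt 0 w.re with hx | hx
    · nlinarith [sq_nonneg κ]
    · have : 0 < (1 + w.re) ^ 2 := by nlinarith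
      nlinarith [mul_nonneg (sub_nonneg.2 hκ) (neg_nonneg.2 hx.le)]
  · nlinarith [sq_nonneg κ]

theorem sq_mul_conj_disc_mem_slitPlane (hκ : κ ^ 2 < 1) (hw : w ∈ ball (0 : ℂ) 1) :
    (1 + w) ^ 2 * conj ((1 - w) ^ 2 + 4 * (κ : ℂ) ^ 2 * w) ∈ slitPlane := by
  have hxy := re_sq_add_im_sq_lt_one_of_mem_ball hw
  set x := w.re
  set y := w.im
  have him : ((1 + w) ^ 2 * conj ((1 - w) ^ 2 + 4 * (κ : ℂ) ^ 2 * w)).im =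
      4 * (1 - κ ^ 2) * y * (1 - x ^ 2 - y ^ 2) := by
    simp only [sq, mul_re, mul_im, add_re, add_im, sub_re, sub_im, conj_re, conj_im, one_re,
      one_im, ofReal_re, ofReal_im, re_ofNat, im_ofNat]
    ring
  have hre : ((1 + w) ^ 2 * conj ((1 - w) ^ 2 + 4 * (κ : ℂ) ^ 2 * w)).re =
      κ ^ 2 * ((1 + x) ^ 2 + y ^ 2) ^ 2 +
        (1 - κ ^ 2) * ((1 - x ^ 2 - y ^ 2) ^ 2 - 4 * y ^ 2) := by
    simp only [sq, mul_re, mul_im, add_re, add_im, sub_re, sub_im, conj_re, conj_im, one_re,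
      one_im, ofReal_re, ofReal_im, re_ofNat, im_ofNat]
    ring
  rw [mem_slitPlane_iff, him, hre]
  rcases eq_or_ne y 0 with hy | hy
  · left
    have hx : x ^ 2 < 1 := by nlinarith
    have h1 : 0 < (1 - κ ^ 2) * (1 - x ^ 2) ^ 2 := by
      have : 0 < 1 - κ ^ 2 := by linarith
      have : 0 < 1 - x ^ 2 := by linarith
      positivity
    rw [hy]
    nlinarith [mul_nonneg (sq_nonneg κ) (sq_nonneg ((1 + x) ^ 2))]
  · right
    have : 0 < 1 - x ^ 2 - y ^ 2 := by linarith
    have : 0 < 1 - κ ^ 2 := by linarith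
    positivity

theorem continuousOn_Rfun (hκ : κ ^ 2 ≤ 1) :
    ContinuousOn (fun z => Rfun z κ) (ball (0 : ℂ) 1) := fun w hw =>
  ((continuousAt_cpow_const (disc_mem_slitPlane hκ hw)).comp
    (f := fun z => (1 - z) ^ 2 + 4 * (κ : ℂ) ^ 2 * z) (by fun_prop)).continuousWithinAt

theorem re_mul_conj_Rfun_ne_zero (hκ : κ ^ 2 < 1) (hw : w ∈ ball (0 : ℂ) 1) :
    ((1 + w) * conj (Rfun w κ)).re ≠ 0 := by
  apply re_ne_zero_of_sq_mem_slitPlane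
  rw [mul_pow, ← map_pow, Rfun_sq]
  exact sq_mul_conj_disc_mem_slitPlane hκ hw

theorem re_mul_conj_Rfun_pos (hκ : κ ^ 2 < 1) (hw : w ∈ ball (0 : ℂ) 1) :
    0 < ((1 + w) * conj (Rfun w κ)).re := by
  have hR := continuousOn_Rfun hκ.le
  refine (convex_ball (0 : ℂ) 1).isPreconnected.pos_of_continuousOn_of_ne_zero (by fun_prop)
    (fun _ hv => re_mul_conj_Rfun_ne_zero hκ hv) (mem_ball_self one_pos) ?_ hw
  simp [Rfun_zero]

end Discriminant

theorem stmt17_general (κ : ℝ) (hκ : κ ∈ Set.Ioo (-1 : ℝ) 1) (z : ℂ)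
    (hz : z ∈ Metric.ball (0 : ℂ) 1) :
    0 < ((1 + z) * (starRingEnd ℂ) (Rfun z (κ : ℂ))).re ∧
    ‖1 + z - Rfun z (κ : ℂ)‖ < ‖1 + z + Rfun z (κ : ℂ)‖ ∧
    (1 + z - Rfun z (κ : ℂ)) / (1 + z + Rfun z (κ : ℂ)) =
      4 * z * (1 - (κ : ℂ) ^ 2) / (1 + z + Rfun z (κ : ℂ)) ^ 2 ∧
    (1 + z - Rfun z (κ : ℂ)) / (1 + z + Rfun z (κ : ℂ)) ∈ Metric.ball (0 : ℂ) 1 := by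
  have hκ2 : κ ^ 2 < 1 := sq_lt_one_iff_abs_lt_one κ |>.mpr (abs_lt.mpr hκ)
  have hpos := re_mul_conj_Rfun_pos hκ2 hz
  have hnorm := norm_sub_lt_norm_add_of_re_mul_conj_pos hpos
  have hne : 1 + z + Rfun z κ ≠ 0 := norm_pos_iff.mp ((norm_nonneg _).trans_lt hnorm)
  refine ⟨hpos, hnorm, ?_, ?_⟩
  · rw [div_eq_div_iff hne (pow_ne_zero 2 hne)]
    linear_combination (-(1 + z + Rfun z κ)) * Rfun_sq z κ
  · rwa [mem_ball_zero_iff, norm_div, div_lt_one (norm_pos_iff.mpr hne)]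

theorem stmt17 (κ : ℝ) (hκ : κ ∈ Set.Ioo (-1 : ℝ) 1) (hκ0 : κ ≠ 0) (z : ℂ)
    (hz : z ∈ Metric.ball (0 : ℂ) 1) :
    0 < ((1 + z) * (starRingEnd ℂ) (Rfun z (κ : ℂ))).re ∧
    ‖1 + z - Rfun z (κ : ℂ)‖ < ‖1 + z + Rfun z (κ : ℂ)‖ ∧
    (1 + z - Rfun z (κ : ℂ)) / (1 + z + Rfun z (κ : ℂ)) =
      4 * z * (1 - (κ : ℂ) ^ 2) / (1 + z + Rfun z (κ : ℂ)) ^ 2 ∧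
    (1 + z - Rfun z (κ : ℂ)) / (1 + z + Rfun z (κ : ℂ)) ∈ Metric.ball (0 : ℂ) 1 :=
  stmt17_general κ hκ z hz
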